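/- arXiv:2410.13548 — 2 statements merged into one kernel-verified Lean document; each statement's English description precedes it below -/
import Mathlib

section
/- Let D_cost be a distribution on the nonnegative reals with mean 1, and draw x₁,...,xₙ i.i.d. from D_cost. With Δ defined as the minimum number of elements to remove so the remaining sum is at most n, for every v ≥ 0: Pr[Δ(x₁,...,xₙ) ≥ v] ≤ 2/v + 4n/v². -/
/-!
Attach to every sample `x` an independent uniform `U ∈ [0, 1]` and call `(x, U)` large when
`x > u`, or `x = u` and `U ≤ θ`, where the randomized quantile `(u, θ)` makes a sample large
with probability exactly `c = v / (2n)`. Removing the large samples shows `Δ ≤ #large`, so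
`Δ ≥ v` forces one of two events. Either `#large ≥ v`, while `E #large = v / 2`: Chebyshev
gives `2 / v`. Or the small parts, which lie in `[0, u]` and have mean at most `1 - u c`, sum
to more than `n`: this is impossible if `u ≤ 1`, and otherwise Chebyshev gives
`n u / (n u c)² ≤ 4n / v²`.
-/

open MeasureTheory ProbabilityTheory Finset
open scoped ENNReal

noncomputable def Delta (n : ℕ) (v : Fin n → ℝ) : ℕ :=
  sInf {k | ∃ I : Finset (Fin n), I.card = k ∧ ∑ i ∈ Iᶜ, v i ≤ n}

open Filter

section Delta

variable {n : ℕ}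

lemma Delta_le_card {y : Fin n → ℝ} {s : Finset (Fin n)} (hs : ∑ i ∈ sᶜ, y i ≤ n) :
    Delta n y ≤ #s :=
  Nat.sInf_le ⟨s, rfl, hs⟩

lemma Delta_le (y : Fin n → ℝ) : Delta n y ≤ n := by
  simpa using Delta_le_card (y := y) (s := univ) (by simp)

lemma exists_card_eq_Delta (y : Fin n → ℝ) :
    ∃ s : Finset (Fin n), #s = Delta n y ∧ ∑ i ∈ sᶜ, y i ≤ n :=
  Nat.sInf_mem (s := {k | ∃ s : Finset (Fin n), #s = k ∧ ∑ i ∈ sᶜ, y i ≤ n})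
    ⟨n, univ, by simp⟩

lemma measurable_Delta : Measurable (Delta n) := by
  refine measurable_of_Iic fun m => ?_
  have : Delta n ⁻¹' Set.Iic m = ⋃ s : Finset (Fin n), ⋃ (_ : #s ≤ m),
      {y : Fin n → ℝ | ∑ i ∈ sᶜ, y i ≤ n} := by
    ext y
    simp only [Set.mem_preimage, Set.mem_Iic, Set.mem_iUnion, Set.mem_ofPred_eq, exists_prop]
    constructor
    · intro h
      obtain ⟨s, hs, hsum⟩ := exists_card_eq_Delta y
      exact ⟨s, hs ▸ h, hsum⟩
    · rintro ⟨s, hsm, hsum⟩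
      exact (Delta_le_card hsum).trans hsm
  rw [this]
  exact .iUnion fun s => .iUnion fun _ =>
    measurableSet_le (Finset.measurable_sum _ fun i _ => measurable_pi_apply i) measurable_const

lemma Delta_le_sum_indicator {α : Type*} (A : Set α) (X : α → ℝ) (f : Fin n → α)
    (h : ∑ i, Aᶜ.indicator X (f i) ≤ n) :
    (Delta n (fun i => X (f i)) : ℝ) ≤ ∑ i, A.indicator 1 (f i) := by
  classical
  have hcompl : ∑ i ∈ (univ.filter fun i => f i ∈ A)ᶜ, X (f i) ≤ n := by
    rw [Finset.compl_filter]
    rwa [sum_indicator_eq_sum_filter univ (fun _ => X) (fun _ => Aᶜ)] at h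
  have hcard : ∑ i, A.indicator (1 : α → ℝ) (f i) = #(univ.filter fun i => f i ∈ A) := by
    rw [sum_indicator_eq_sum_filter univ (fun _ => (1 : α → ℝ)) (fun _ => A)]
    simp
  rw [hcard]
  exact_mod_cast Delta_le_card hcompl

end Delta

lemma meas_pi_sum_ge_le_variance_div_sq {ι α : Type*} [Fintype ι] [MeasurableSpace α]
    {K : Measure α} [IsProbabilityMeasure K] {G : α → ℝ} (hG : MemLp G 2 K) {d : ℝ}
    (hd : 0 < d) :
    Measure.pi (fun _ : ι => K) {f | (Fintype.card ι : ℝ) * K[G] + d ≤ ∑ i, G (f i)}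
      ≤ ENNReal.ofReal ((Fintype.card ι : ℝ) * Var[G; K] / d ^ 2) := by
  set S : (ι → α) → ℝ := ∑ i, fun f => G (f i)
  have hS : ∀ f, S f = ∑ i, G (f i) := fun f => Finset.sum_apply f _ _
  have hGi : ∀ i, MemLp (fun f : ι → α => G (f i)) 2 (Measure.pi fun _ => K) := fun i =>
    hG.comp_measurePreserving (measurePreserving_eval _ i)
  have hmean : (Measure.pi fun _ : ι => K)[S] = (Fintype.card ι : ℝ) * K[G] := by
    simp_rw [hS]
    rw [integral_finsetSum _ fun i _ => (hGi i).integrable one_le_two]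
    simp [integral_comp_eval (μ := fun _ : ι => K) (f := G) hG.aestronglyMeasurable]
  have hvar : Var[S; Measure.pi fun _ : ι => K] = (Fintype.card ι : ℝ) * Var[G; K] := by
    rw [variance_sum_pi (X := fun _ => G) fun _ => hG]
    simp
  calc Measure.pi (fun _ : ι => K) {f | (Fintype.card ι : ℝ) * K[G] + d ≤ ∑ i, G (f i)}
      ≤ Measure.pi (fun _ : ι => K) {f | d ≤ |S f - (Measure.pi fun _ : ι => K)[S]|} := by
        refine measure_mono fun f hf => ?_
        simp only [Set.mem_ofPred_eq] at hf
        rw [Set.mem_ofPred_eq, hS, hmean]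
        exact (le_sub_iff_add_le'.mpr hf).trans (le_abs_self _)
    _ ≤ _ := by
        rw [← hvar]
        exact meas_ge_le_variance_div_sq (memLp_finsetSum' _ fun i _ => hGi i) hd

lemma exists_measureReal_Ioi_le_le_measureReal_Ici (ν : Measure ℝ) [IsProbabilityMeasure ν]
    {c : ℝ} (hc0 : 0 < c) (hc1 : c < 1) :
    ∃ u, ν.real (Set.Ioi u) ≤ c ∧ c ≤ ν.real (Set.Ici u) := by
  let T : Set ℝ := {w | 1 - c ≤ cdf ν w}
  have hT : T.Nonempty :=
    ((tendsto_cdf_atTop ν).eventually_const_le (show 1 - c < 1 by linarith)).exists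
  have hTbdd : BddBelow T := by
    obtain ⟨w₀, hw₀⟩ := ((tendsto_cdf_atBot ν).eventually_lt_const
      (show (0 : ℝ) < 1 - c by linarith)).exists_forall_of_atBot
    exact ⟨w₀, fun w hw => le_of_not_gt fun hlt => (hw₀ w hlt.le).not_ge hw⟩
  refine ⟨sInf T, ?_, ?_⟩
  · have hright : 1 - c ≤ cdf ν (sInf T) := by
      refine ge_of_tendsto (((cdf ν).right_continuous _).mono Set.Ioi_subset_Ici_self)
        (eventually_nhdsWithin_of_forall fun w hw => ?_)
      obtain ⟨t, htT, htw⟩ := exists_lt_of_csInf_lt hT hw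
      exact htT.trans ((cdf ν).mono htw.le)
    rw [← Set.compl_Iic, probReal_compl_eq_one_sub measurableSet_Iic, ← cdf_eq_real]
    linarith
  · have hleft : Function.leftLim (cdf ν) (sInf T) ≤ 1 - c :=
      le_of_tendsto ((cdf ν).mono.tendsto_leftLim _) (eventually_nhdsWithin_of_forall
        fun w hw => (not_le.mp (notMem_of_lt_csInf (s := T) hw hTbdd)).le)
    have hIci := (cdf ν).measure_Ici (tendsto_cdf_atTop ν) (sInf T)
    rw [measure_cdf] at hIci
    rw [measureReal_def, hIci, ENNReal.toReal_ofReal (by linarith)]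
    linarith

lemma exists_randomized_threshold (ν : Measure ℝ) [IsProbabilityMeasure ν]
    {c : ℝ} (hc0 : 0 < c) (hc1 : c < 1) :
    ∃ (u : ℝ) (A : Set (ℝ × unitInterval)), MeasurableSet A ∧
      (ν.prod volume).real A = c ∧ (∀ p ∈ A, u ≤ p.1) ∧ (∀ p ∉ A, p.1 ≤ u) := by
  obtain ⟨u, hIoi, hIci⟩ := exists_measureReal_Ioi_le_le_measureReal_Ici ν hc0 hc1
  have hsplit : ν.real (Set.Ici u) = ν.real (Set.Ioi u) + ν.real {u} := by
    rw [← Set.Ioi_insert, Set.insert_eq, measureReal_union (by simp) measurableSet_Ioi, add_comm]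
  -- if `ν {u} = 0` then `θ = 0 / 0 = 0`, and the quantile bounds force `ν (Ioi u) = c`
  set θ := (c - ν.real (Set.Ioi u)) / ν.real {u}
  have hθ : θ ∈ unitInterval :=
    ⟨div_nonneg (by linarith) measureReal_nonneg,
      div_le_one_of_le₀ (by linarith) measureReal_nonneg⟩
  have hmass : ν.real (Set.Ioi u) + ν.real {u} * θ = c := by
    rcases eq_or_ne (ν.real {u}) 0 with h | h
    · simp only [h, zero_mul, add_zero]; linarith
    · rw [mul_div_cancel₀ _ h]; ring
  refine ⟨u, Prod.fst ⁻¹' Set.Ioi u ∪ {u} ×ˢ Set.Iic ⟨θ, hθ⟩,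
    (measurable_fst measurableSet_Ioi).union ((measurableSet_singleton u).prod measurableSet_Iic),
    ?_, ?_, ?_⟩
  · rw [measureReal_union, ← Set.prod_univ, measureReal_prod_prod, measureReal_prod_prod]
    · simpa [measureReal_def, unitInterval.volume_Iic, ENNReal.toReal_ofReal hθ.1] using hmass
    · rw [Set.disjoint_left]
      rintro p hp ⟨hpu, -⟩
      exact (ne_of_gt hp) hpu
    · exact (measurableSet_singleton u).prod measurableSet_Iic
  · rintro p (hp | ⟨hp, -⟩)
    · exact le_of_lt hp
    · exact le_of_eq (Set.mem_singleton_iff.mp hp).symm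
  · intro p hp
    simp only [Set.mem_union, Set.mem_preimage, Set.mem_Ioi, not_or] at hp
    exact not_lt.mp hp.1

section ThresholdSplit

variable {α : Type*} [MeasurableSpace α] {K : Measure α} [IsProbabilityMeasure K] {n : ℕ}
  {A : Set α} {X : α → ℝ} {u v : ℝ}

lemma meas_pi_le_sum_indicator_le (hA : MeasurableSet A) (hv : 0 < v)
    (hAv : n * K.real A = v / 2) :
    Measure.pi (fun _ : Fin n => K) {f | v ≤ ∑ i, A.indicator 1 (f i)}
      ≤ ENNReal.ofReal (2 / v) := by
  have hmean : K[A.indicator 1] = K.real A := integral_indicator_one hA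
  have hmem : MemLp (A.indicator (1 : α → ℝ)) 2 K := (memLp_const 1).indicator hA
  have hvar : Var[A.indicator 1; K] ≤ K.real A := by
    refine (variance_le_expectation_sq hmem.aestronglyMeasurable).trans_eq ?_
    rw [← hmean]
    congr 1 with a
    by_cases ha : a ∈ A <;> simp [ha]
  calc Measure.pi (fun _ : Fin n => K) {f | v ≤ ∑ i, A.indicator 1 (f i)}
      ≤ Measure.pi (fun _ : Fin n => K)
          {f | (Fintype.card (Fin n) : ℝ) * K[A.indicator 1] + v / 2
            ≤ ∑ i, A.indicator 1 (f i)} := by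
        refine measure_mono fun f hf => ?_
        simp only [Set.mem_ofPred_eq, Fintype.card_fin, hmean, hAv] at hf ⊢
        linarith
    _ ≤ ENNReal.ofReal ((Fintype.card (Fin n) : ℝ) * Var[A.indicator 1; K] / (v / 2) ^ 2) :=
        meas_pi_sum_ge_le_variance_div_sq hmem (by positivity)
    _ ≤ ENNReal.ofReal (2 / v) := by
        refine ENNReal.ofReal_le_ofReal ?_
        rw [Fintype.card_fin]
        calc (n : ℝ) * Var[A.indicator 1; K] / (v / 2) ^ 2 ≤ n * K.real A / (v / 2) ^ 2 := by
              gcongr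
          _ = 2 / v := by rw [hAv]; field_simp

lemma variance_le_mul_integral {G : α → ℝ} (hG : MemLp G 2 K) (hG0 : ∀ᵐ a ∂K, 0 ≤ G a)
    (hGu : ∀ᵐ a ∂K, G a ≤ u) : Var[G; K] ≤ u * K[G] :=
  calc Var[G; K] ≤ K[G ^ 2] := variance_le_expectation_sq hG.aestronglyMeasurable
    _ ≤ K[fun a => u * G a] := by
        refine integral_mono_ae hG.integrable_sq ((hG.integrable one_le_two).const_mul u) ?_
        filter_upwards [hG0, hGu] with a ha0 hau
        simpa [sq] using mul_le_mul_of_nonneg_right hau ha0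
    _ = u * K[G] := integral_const_mul u G

lemma integral_indicator_compl_add_mul_le (hX : Integrable X K) (hA : MeasurableSet A)
    (hAu : ∀ a ∈ A, u ≤ X a) : K[Aᶜ.indicator X] + u * K.real A ≤ K[X] := by
  have hlarge : u * K.real A ≤ K[A.indicator X] := by
    rw [mul_comm, ← smul_eq_mul, ← integral_indicator_const u hA]
    refine integral_mono (integrable_const u |>.indicator hA) (hX.indicator hA) fun a => ?_
    by_cases ha : a ∈ A <;> simp [ha, hAu a]
  have hsplit : K[Aᶜ.indicator X] + K[A.indicator X] = K[X] := by
    rw [← integral_add (hX.indicator hA.compl) (hX.indicator hA)]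
    congr 1 with a
    by_cases ha : a ∈ A <;> simp [ha]
  linarith

lemma meas_pi_lt_sum_indicator_compl_le (hX : Measurable X) (hX0 : ∀ᵐ a ∂K, 0 ≤ X a)
    (hX1 : K[X] = 1) (hA : MeasurableSet A) (hAu : ∀ a ∈ A, u ≤ X a)
    (hAcu : ∀ a ∉ A, X a ≤ u) (hv : 0 < v) (hAv : n * K.real A = v / 2) :
    Measure.pi (fun _ : Fin n => K) {f | n < ∑ i, Aᶜ.indicator X (f i)}
      ≤ ENNReal.ofReal (4 * n / v ^ 2) := by
  set G := Aᶜ.indicator X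
  have hGu (a : α) : G a ≤ max u 0 := by
    by_cases ha : a ∈ A
    · simp [G, ha]
    · simpa [G, ha] using Or.inl (hAcu a ha)
  rcases le_or_gt u 1 with hu | hu
  · have hsmall (f : Fin n → α) : ∑ i, G (f i) ≤ n := by
      simpa using sum_le_sum fun i (_ : i ∈ univ) => (hGu (f i)).trans (max_le hu zero_le_one)
    simp [not_lt.mpr (hsmall _)]
  replace hGu (a : α) : G a ≤ u := (hGu a).trans_eq (max_eq_left (by linarith))
  have hG0 : ∀ᵐ a ∂K, 0 ≤ G a := by
    filter_upwards [hX0] with a ha using Set.indicator_nonneg (fun _ _ => ha) a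
  have hmem : MemLp G 2 K := by
    refine MemLp.of_bound (hX.indicator hA.compl).aestronglyMeasurable u ?_
    filter_upwards [hG0] with a ha
    rw [Real.norm_of_nonneg ha]
    exact hGu a
  have hmean : K[G] + u * K.real A ≤ 1 :=
    hX1 ▸ integral_indicator_compl_add_mul_le (integrable_of_integral_eq_one hX1) hA hAu
  have hvar : Var[G; K] ≤ u := by
    have hG1 : K[G] ≤ 1 := by nlinarith [measureReal_nonneg (μ := K) (s := A)]
    exact (variance_le_mul_integral hmem hG0 (.of_forall hGu)).trans (by nlinarith)
  calc Measure.pi (fun _ : Fin n => K) {f | n < ∑ i, G (f i)}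
      ≤ Measure.pi (fun _ : Fin n => K)
          {f | (Fintype.card (Fin n) : ℝ) * K[G] + u * (v / 2) ≤ ∑ i, G (f i)} := by
        refine measure_mono fun f hf => ?_
        simp only [Set.mem_ofPred_eq, Fintype.card_fin] at hf ⊢
        rw [← hAv]
        nlinarith [Nat.cast_nonneg (α := ℝ) n]
    _ ≤ ENNReal.ofReal ((Fintype.card (Fin n) : ℝ) * Var[G; K] / (u * (v / 2)) ^ 2) :=
        meas_pi_sum_ge_le_variance_div_sq hmem (by positivity)
    _ ≤ ENNReal.ofReal (4 * n / v ^ 2) := by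
        refine ENNReal.ofReal_le_ofReal ?_
        rw [Fintype.card_fin]
        calc (n : ℝ) * Var[G; K] / (u * (v / 2)) ^ 2 ≤ n * u / (u * (v / 2)) ^ 2 := by
              gcongr
          _ = 4 * n / (u * v ^ 2) := by field_simp; ring
          _ ≤ 4 * n / v ^ 2 := by
              gcongr
              nlinarith [sq_nonneg v]

lemma meas_pi_le_Delta_le (hX : Measurable X) (hX0 : ∀ᵐ a ∂K, 0 ≤ X a) (hX1 : K[X] = 1)
    (hA : MeasurableSet A) (hAu : ∀ a ∈ A, u ≤ X a) (hAcu : ∀ a ∉ A, X a ≤ u)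
    (hv : 0 < v) (hAv : n * K.real A = v / 2) :
    Measure.pi (fun _ : Fin n => K) {f | v ≤ (Delta n (fun i => X (f i)) : ℝ)}
      ≤ ENNReal.ofReal (2 / v) + ENNReal.ofReal (4 * n / v ^ 2) := by
  calc Measure.pi (fun _ : Fin n => K) {f | v ≤ (Delta n (fun i => X (f i)) : ℝ)}
      ≤ Measure.pi (fun _ : Fin n => K) ({f | v ≤ ∑ i, A.indicator 1 (f i)}
          ∪ {f | n < ∑ i, Aᶜ.indicator X (f i)}) := by
        refine measure_mono fun f hf => ?_
        by_cases hsmall : ∑ i, Aᶜ.indicator X (f i) ≤ n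
        · exact Or.inl (le_trans hf (Delta_le_sum_indicator A X f hsmall))
        · exact Or.inr (not_le.mp hsmall)
    _ ≤ _ := measure_union_le _ _
    _ ≤ _ := add_le_add (meas_pi_le_sum_indicator_le hA hv hAv)
        (meas_pi_lt_sum_indicator_compl_le hX hX0 hX1 hA hAu hAcu hv hAv)

end ThresholdSplit

lemma measure_preimage_eq_pi_prod {Ω β : Type*} [MeasurableSpace Ω] [MeasurableSpace β]
    {μ : Measure Ω} {ν : Measure ℝ} [IsProbabilityMeasure ν]
    (ρ : Measure β) [IsProbabilityMeasure ρ] {n : ℕ} {x : Fin n → Ω → ℝ}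
    (hmeas : ∀ i, Measurable (x i)) (hind : iIndepFun x μ) (hdist : ∀ i, μ.map (x i) = ν)
    {s : Set (Fin n → ℝ)} (hs : MeasurableSet s) :
    μ ((fun ω i => x i ω) ⁻¹' s)
      = Measure.pi (fun _ : Fin n => ν.prod ρ) ((fun f i => (f i).1) ⁻¹' s) := by
  rw [← Measure.map_apply (measurable_pi_lambda _ hmeas) hs,
    ← Measure.map_apply (by fun_prop) hs, hind.map_fun_eq_pi_map fun i => (hmeas i).aemeasurable,
    Measure.pi_map_pi fun _ => measurable_fst.aemeasurable]
  simp [hdist, Measure.map_fst_prod]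

theorem statement8_general {Ω : Type*} [MeasurableSpace Ω] (μ : Measure Ω)
    (n : ℕ) (ν : Measure ℝ) [IsProbabilityMeasure ν]
    (hsupp : ν (Set.Iio 0) = 0) (hmean : ∫ t, t ∂ν = 1)
    (x : Fin n → Ω → ℝ) (hmeas : ∀ i, Measurable (x i))
    (hind : iIndepFun x μ)
    (hdist : ∀ i, μ.map (x i) = ν) :
    ∀ v : ℝ, 0 ≤ v →
      μ {ω | v ≤ (Delta n (fun i => x i ω) : ℝ)}
        ≤ 2 / ENNReal.ofReal v + 4 * n / (ENNReal.ofReal v) ^ 2 := by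
  intro v hv
  rcases hv.eq_or_lt with rfl | hv0
  · simp [ENNReal.div_zero two_ne_zero]
  rcases lt_or_ge (n : ℝ) v with hnv | hvn
  · have hempty : {ω | v ≤ (Delta n (fun i => x i ω) : ℝ)} = ∅ :=
      Set.eq_empty_of_forall_notMem fun ω hω =>
        (hnv.trans_le hω).not_ge (by exact_mod_cast Delta_le _)
    simp [hempty]
  have hn : (0 : ℝ) < n := hv0.trans_le hvn
  obtain ⟨u, A, hA, hAc, hAu, hAcu⟩ := exists_randomized_threshold ν (c := v / (2 * n))
    (by positivity) (by rw [div_lt_one (by positivity)]; linarith)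
  have hX0 : ∀ᵐ p ∂ν.prod (volume : Measure unitInterval), 0 ≤ p.1 :=
    Measure.quasiMeasurePreserving_fst.ae (ae_iff.2 (by simpa [not_le, Set.Iio_def] using hsupp))
  have hX1 : ∫ p, p.1 ∂ν.prod (volume : Measure unitInterval) = 1 := by
    simpa [hmean] using integral_fun_fst (μ := ν) (ν := (volume : Measure unitInterval)) id
  calc μ {ω | v ≤ (Delta n (fun i => x i ω) : ℝ)}
      = Measure.pi (fun _ : Fin n => ν.prod volume)
          {f | v ≤ (Delta n (fun i => (f i).1) : ℝ)} :=
        measure_preimage_eq_pi_prod volume hmeas hind hdist (s := {y | v ≤ (Delta n y : ℝ)})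
          (measurableSet_le measurable_const (measurable_from_top.comp measurable_Delta))
    _ ≤ ENNReal.ofReal (2 / v) + ENNReal.ofReal (4 * n / v ^ 2) :=
        meas_pi_le_Delta_le measurable_fst hX0 hX1 hA hAu hAcu hv0 (by rw [hAc]; field_simp)
    _ = 2 / ENNReal.ofReal v + 4 * n / (ENNReal.ofReal v) ^ 2 := by
        rw [ENNReal.ofReal_div_of_pos hv0, ENNReal.ofReal_div_of_pos (by positivity),
          ENNReal.ofReal_pow hv, ENNReal.ofReal_mul (by norm_num)]
        simp

/-- For `x₁,…,xₙ` i.i.d. from a distribution `ν` on the nonnegative reals with mean `1`, and any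
`v ≥ 0`, `Pr[Δ(x₁,…,xₙ) ≥ v] ≤ 2/v + 4n/v²`. -/
theorem statement8 {Ω : Type*} [MeasurableSpace Ω] (μ : Measure Ω) [IsProbabilityMeasure μ]
    (n : ℕ) (ν : Measure ℝ) [IsProbabilityMeasure ν]
    (hsupp : ν (Set.Iio 0) = 0) (hmean : ∫ t, t ∂ν = 1)
    (x : Fin n → Ω → ℝ) (hmeas : ∀ i, Measurable (x i))
    (hind : iIndepFun x μ)
    (hdist : ∀ i, μ.map (x i) = ν) :
    ∀ v : ℝ, 0 ≤ v →
      μ {ω | v ≤ (Delta n (fun i => x i ω) : ℝ)}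
        ≤ 2 / ENNReal.ofReal v + 4 * n / (ENNReal.ofReal v) ^ 2 :=
  statement8_general μ n ν hsupp hmean x hmeas hind hdist
end

section
/- Let x₁,...,x_m be independent finite-valued random variables, and let Corrupt : X^m → X^m be a function such that, for each input S, each coordinate of Corrupt(S) takes one of at most d possible values determined by the corresponding coordinate of S (i.e., conditioned on Sᵢ, there are at most d possible values of Corrupt(S)ᵢ). Let S' = Corrupt(S) where S = (x₁,...,x_m). Then for any r < m, E_{i,B}[ I(S'_i ; S'_B) ] ≤ (m/(m−r)) · ln d, where i is uniform on [m] and B is a uniform size-r subset of [m]∖{i}. -/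
/-!
Write `H` for Shannon entropy and `S'ᵢ` for the corrupted coordinates. For a fixed `B`, the
terms `I(S'ᵢ ; S'_B) = H(S'ᵢ) + H(S'_B) - H(S'_{B ∪ {i}})` with `i ∉ B` sum, by submodularity
of `A ↦ H(S'_A)`, to at most the total correlation `∑ᵢ H(S'ᵢ) - H(S')`. Independence gives
`∑ᵢ H(xᵢ) = H(x) ≤ H(x, S') ≤ H(S') + ∑ᵢ H(xᵢ | S')`, and `H(xᵢ | S') ≤ H(xᵢ | S'ᵢ)
= H(xᵢ, S'ᵢ) - H(S'ᵢ) ≤ H(xᵢ) + log d - H(S'ᵢ)` because `S'ᵢ` takes at most `d` values given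
`xᵢ`; so the total correlation is at most `m log d`. Averaging over the `C(m, r)` sets `B`
and using `m C(m-1, r) = C(m, r) (m - r)` gives the bound.
-/

open Finset
open scoped Classical

noncomputable section

/-- `p` is a probability mass function on the finite sample space `Ω`. -/
def IsPMF {Ω : Type*} [Fintype Ω] (p : Ω → ℝ) : Prop :=
  (∀ ω, 0 ≤ p ω) ∧ ∑ ω, p ω = 1

/-- Distribution (pmf) of the random variable `X` under the pmf `p`. -/
noncomputable def dist' {Ω α : Type*} [Fintype Ω] (p : Ω → ℝ) (X : Ω → α) : α → ℝ :=
  fun a => ∑ ω, if X ω = a then p ω else 0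

/-- KL divergence between two pmfs on a finite space (natural log). -/
noncomputable def KL {α : Type*} [Fintype α] (q r : α → ℝ) : ℝ :=
  ∑ a, q a * Real.log (q a / r a)

/-- Mutual information between random variables `X` and `Y` under pmf `p`. -/
noncomputable def MI {Ω α β : Type*} [Fintype Ω] [Fintype α] [Fintype β]
    (p : Ω → ℝ) (X : Ω → α) (Y : Ω → β) : ℝ :=
  KL (dist' p fun ω => (X ω, Y ω)) (fun ab => dist' p X ab.1 * dist' p Y ab.2)

open Real

section Entropy

variable {Ω α β γ : Type*} [Fintype Ω] {p : Ω → ℝ}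

lemma IsPMF.nonempty (hp : IsPMF p) : Nonempty Ω := by
  by_contra h
  rw [not_nonempty_iff] at h
  simpa using hp.2

lemma IsPMF.sum_mul_le_sum_mul (hp : IsPMF p) {g h : Ω → ℝ} (hgh : ∀ ω, 0 < p ω → g ω ≤ h ω) :
    ∑ ω, p ω * g ω ≤ ∑ ω, p ω * h ω := by
  refine sum_le_sum fun ω _ => ?_
  rcases (hp.1 ω).lt_or_eq with hω | hω
  · exact mul_le_mul_of_nonneg_left (hgh ω hω) hω.le
  · simp [← hω]

lemma IsPMF.sum_mul_congr (hp : IsPMF p) {g h : Ω → ℝ} (hgh : ∀ ω, 0 < p ω → g ω = h ω) :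
    ∑ ω, p ω * g ω = ∑ ω, p ω * h ω :=
  le_antisymm (hp.sum_mul_le_sum_mul fun ω hω => (hgh ω hω).le)
    (hp.sum_mul_le_sum_mul fun ω hω => (hgh ω hω).ge)

lemma dist'_nonneg (hp : IsPMF p) (X : Ω → α) (a : α) : 0 ≤ dist' p X a :=
  sum_nonneg fun ω _ => by split_ifs; exacts [hp.1 ω, le_rfl]

lemma sum_dist'_mul [Fintype α] (p : Ω → ℝ) (X : Ω → α) (φ : α → ℝ) :
    ∑ a, dist' p X a * φ a = ∑ ω, p ω * φ (X ω) := by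
  simp only [dist', sum_mul, ite_mul, zero_mul]
  rw [sum_comm]
  simp

lemma sum_dist' [Fintype α] (hp : IsPMF p) (X : Ω → α) : ∑ a, dist' p X a = 1 := by
  simpa [hp.2] using sum_dist'_mul p X fun _ => 1

lemma sum_dist'_pair_right [Fintype β] (X : Ω → α) (Y : Ω → β) (a : α) :
    ∑ b, dist' p (fun ω => (X ω, Y ω)) (a, b) = dist' p X a := by
  simp only [dist', Prod.mk.injEq, ite_and]
  rw [sum_comm]
  simp

lemma le_dist'_apply (hp : IsPMF p) (X : Ω → α) (ω : Ω) : p ω ≤ dist' p X (X ω) := by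
  simpa [dist'] using single_le_sum (f := fun ω' => if X ω' = X ω then p ω' else 0)
    (fun ω' _ => by split_ifs; exacts [hp.1 ω', le_rfl]) (mem_univ ω)

lemma dist'_apply_pos (hp : IsPMF p) (X : Ω → α) {ω : Ω} (hω : 0 < p ω) :
    0 < dist' p X (X ω) :=
  hω.trans_le (le_dist'_apply hp X ω)

lemma exists_pos_of_dist'_pos (hp : IsPMF p) {X : Ω → α} {a : α} (h : 0 < dist' p X a) :
    ∃ ω, 0 < p ω ∧ X ω = a := by
  by_contra! hc
  refine h.ne' (sum_eq_zero fun ω _ => ?_)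
  split_ifs with hX
  · exact ((hp.1 ω).lt_or_eq.resolve_left fun hω => hc ω hω hX).symm
  · rfl

variable [Fintype α] [Fintype β] [Fintype γ]

def entropy (p : Ω → ℝ) (X : Ω → α) : ℝ :=
  -∑ a, dist' p X a * log (dist' p X a)

def condEntropy (p : Ω → ℝ) (X : Ω → α) (Y : Ω → β) : ℝ :=
  entropy p (fun ω => (X ω, Y ω)) - entropy p Y

lemma entropy_eq_sum (p : Ω → ℝ) (X : Ω → α) :
    entropy p X = -∑ ω, p ω * log (dist' p X (X ω)) := by
  rw [entropy, sum_dist'_mul]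

lemma entropy_congr {X : Ω → α} {Y : Ω → β} (h : ∀ ω₁ ω₂, X ω₁ = X ω₂ ↔ Y ω₁ = Y ω₂) :
    entropy p X = entropy p Y := by
  have hdist : ∀ ω, dist' p X (X ω) = dist' p Y (Y ω) := fun ω =>
    sum_congr rfl fun ω' _ => by simp only [h ω' ω]
  simp only [entropy_eq_sum, hdist]

lemma entropy_const (hp : IsPMF p) (b : β) : entropy p (fun _ => b) = 0 := by
  simp [entropy_eq_sum, dist', hp.2]

lemma MI_eq (hp : IsPMF p) (X : Ω → α) (Y : Ω → β) :
    MI p X Y = entropy p X + entropy p Y - entropy p (fun ω => (X ω, Y ω)) := by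
  rw [MI, KL, sum_dist'_mul p (fun ω => (X ω, Y ω))
    (fun ab => log (dist' p (fun ω => (X ω, Y ω)) ab / (dist' p X ab.1 * dist' p Y ab.2))),
    hp.sum_mul_congr (h := fun ω => log (dist' p (fun ω => (X ω, Y ω)) (X ω, Y ω))
      - log (dist' p X (X ω)) - log (dist' p Y (Y ω))) fun ω hω => by
      rw [log_div (dist'_apply_pos hp _ hω).ne'
        (mul_pos (dist'_apply_pos hp X hω) (dist'_apply_pos hp Y hω)).ne',
        log_mul (dist'_apply_pos hp X hω).ne' (dist'_apply_pos hp Y hω).ne', sub_sub]]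
  simp only [entropy_eq_sum, mul_sub, sum_sub_distrib]
  ring

lemma entropy_le_entropy_pair (hp : IsPMF p) (X : Ω → α) (Y : Ω → β) :
    entropy p X ≤ entropy p (fun ω => (X ω, Y ω)) := by
  simp only [entropy_eq_sum, neg_le_neg_iff]
  refine hp.sum_mul_le_sum_mul fun ω hω => log_le_log (dist'_apply_pos hp _ hω) ?_
  rw [← sum_dist'_pair_right X Y]
  exact single_le_sum (f := fun b => dist' p (fun ω => (X ω, Y ω)) (X ω, b))
    (fun b _ => dist'_nonneg hp _ _) (mem_univ (Y ω))

/-- Gibbs' inequality against a sub-probability weight `w`. -/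
lemma entropy_le_neg_sum_mul_log (hp : IsPMF p) (X : Ω → α) {w : α → ℝ} (hw0 : ∀ a, 0 ≤ w a)
    (hw1 : ∑ a, w a ≤ 1) (hpos : ∀ ω, 0 < p ω → 0 < w (X ω)) :
    entropy p X ≤ -∑ ω, p ω * log (w (X ω)) := by
  have hpt : ∀ a, dist' p X a - w a ≤
      dist' p X a * log (dist' p X a) - dist' p X a * log (w a) := by
    intro a
    rcases (dist'_nonneg hp X a).lt_or_eq with hq | hq
    · obtain ⟨ω, hω, rfl⟩ := exists_pos_of_dist'_pos hp hq
      have hw := hpos ω hω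
      have h := one_sub_inv_le_log_of_pos (div_pos hq hw)
      rw [log_div hq.ne' hw.ne', inv_div] at h
      have := mul_le_mul_of_nonneg_left h hq.le
      rw [mul_sub, mul_one, mul_div_cancel₀ _ hq.ne'] at this
      linarith
    · simp [← hq, hw0 a]
  have hsum := sum_le_sum fun a (_ : a ∈ univ) => hpt a
  rw [sum_sub_distrib, sum_sub_distrib, sum_dist' hp, sum_dist'_mul p X fun a => log (w a)] at hsum
  rw [entropy]
  linarith

lemma entropy_submodular (hp : IsPMF p) (X : Ω → α) (Y : Ω → β) (Z : Ω → γ) :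
    entropy p Y + entropy p (fun ω => ((X ω, Y ω), Z ω)) ≤
      entropy p (fun ω => (X ω, Y ω)) + entropy p (fun ω => (Y ω, Z ω)) := by
  simp only [entropy_eq_sum]
  -- compare with the Markov chain `X - Y - Z` having the same `(X, Y)` and `(Y, Z)` marginals
  set qXY := dist' p fun ω => (X ω, Y ω)
  set qYZ := dist' p fun ω => (Y ω, Z ω)
  set qY := dist' p Y
  have hw1 : ∑ s : (α × β) × γ, qXY s.1 * qYZ (s.1.2, s.2) / qY s.1.2 ≤ 1 := by
    rw [Fintype.sum_prod_type, ← sum_dist' hp (fun ω => (X ω, Y ω))]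
    refine sum_le_sum fun ab _ => ?_
    dsimp only
    rw [← sum_div, ← mul_sum, sum_dist'_pair_right, mul_div_assoc]
    exact mul_le_of_le_one_right (dist'_nonneg hp _ _) (div_self_le_one _)
  have h := entropy_le_neg_sum_mul_log hp (fun ω => ((X ω, Y ω), Z ω))
    (fun s => div_nonneg (mul_nonneg (dist'_nonneg hp _ _) (dist'_nonneg hp _ _))
      (dist'_nonneg hp _ _)) hw1 fun ω hω => by
    have := dist'_apply_pos hp (fun ω => (X ω, Y ω)) hω
    have := dist'_apply_pos hp (fun ω => (Y ω, Z ω)) hω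
    have := dist'_apply_pos hp Y hω
    positivity
  rw [hp.sum_mul_congr (h := fun ω => log (qXY (X ω, Y ω)) + log (qYZ (Y ω, Z ω)) - log (qY (Y ω)))
    fun ω hω => by
      rw [log_div (mul_pos (dist'_apply_pos hp _ hω) (dist'_apply_pos hp _ hω)).ne'
        (dist'_apply_pos hp Y hω).ne',
        log_mul (dist'_apply_pos hp _ hω).ne' (dist'_apply_pos hp _ hω).ne']] at h
  simp only [mul_sub, mul_add, sum_sub_distrib, sum_add_distrib, entropy_eq_sum] at h
  linarith

lemma entropy_pair_le_add_log (hp : IsPMF p) {V : Ω → α} {W : Ω → β} {F : α → Finset β} {d : ℕ}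
    (hF : ∀ a, (F a).card ≤ d) (hWF : ∀ ω, W ω ∈ F (V ω)) :
    entropy p (fun ω => (V ω, W ω)) ≤ entropy p V + log d := by
  have hd : (0 : ℝ) < d := by
    obtain ⟨ω⟩ := hp.nonempty
    exact_mod_cast (card_pos.mpr ⟨_, hWF ω⟩).trans_le (hF (V ω))
  -- compare with `W` uniform on `F V`
  have hw1 : ∑ s : α × β, (if s.2 ∈ F s.1 then dist' p V s.1 / d else 0) ≤ 1 := by
    rw [Fintype.sum_prod_type, ← sum_dist' hp V]
    refine sum_le_sum fun a _ => ?_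
    dsimp only
    rw [sum_ite_mem, univ_inter, sum_const, nsmul_eq_mul, mul_div_assoc']
    exact div_le_of_le_mul₀ hd.le (dist'_nonneg hp V a)
      (by rw [mul_comm]; gcongr; exacts [dist'_nonneg hp V a, hF a])
  have h := entropy_le_neg_sum_mul_log hp (fun ω => (V ω, W ω))
    (fun s => by split_ifs; exacts [div_nonneg (dist'_nonneg hp V _) hd.le, le_rfl]) hw1
    fun ω hω => by simpa [hWF ω] using div_pos (dist'_apply_pos hp V hω) hd
  rw [hp.sum_mul_congr (h := fun ω => log (dist' p V (V ω)) - log d) fun ω hω => by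
    simp only [hWF ω, if_true, log_div (dist'_apply_pos hp V hω).ne' hd.ne']] at h
  simp only [mul_sub, sum_sub_distrib, ← sum_mul, hp.2, one_mul] at h
  rw [entropy_eq_sum p V]
  linarith

lemma condEntropy_le_condEntropy_comp (hp : IsPMF p) (X : Ω → α) (Z : Ω → γ) (g : γ → β) :
    condEntropy p X Z ≤ condEntropy p X (g ∘ Z) := by
  have h := entropy_submodular hp X (g ∘ Z) Z
  have hXZ : entropy p (fun ω => ((X ω, (g ∘ Z) ω), Z ω)) = entropy p (fun ω => (X ω, Z ω)) :=
    entropy_congr fun ω₁ ω₂ => by simp only [Prod.ext_iff, Function.comp_apply]; grind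
  have hZ : entropy p (fun ω => ((g ∘ Z) ω, Z ω)) = entropy p Z :=
    entropy_congr fun ω₁ ω₂ => by simp only [Prod.ext_iff, Function.comp_apply]; grind
  rw [condEntropy, condEntropy]
  linarith

lemma entropy_pi_of_indep {ι : Type*} [Fintype ι] [DecidableEq ι] (hp : IsPMF p)
    (x : ι → Ω → α) (hind : dist' p (fun ω i => x i ω) = fun v => ∏ i, dist' p (x i) (v i)) :
    entropy p (fun ω i => x i ω) = ∑ i, entropy p (x i) := by
  rw [entropy_eq_sum, hind, hp.sum_mul_congr (h := fun ω => ∑ i, log (dist' p (x i) (x i ω)))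
    fun ω hω => log_prod fun i _ => (dist'_apply_pos hp (x i) hω).ne']
  simp only [mul_sum, entropy_eq_sum]
  rw [sum_comm, sum_neg_distrib]

section SetFunction

variable {ι : Type*} [DecidableEq ι]

/-- Submodularity of a set function, in its diminishing-returns form. -/
def IsSubmodular (E : Finset ι → ℝ) : Prop :=
  ∀ ⦃B D : Finset ι⦄ (i : ι), B ⊆ D → E (insert i D) + E B ≤ E D + E (insert i B)

lemma IsSubmodular.le_add_sum_insert_sub {E : Finset ι → ℝ} (hE : IsSubmodular E)
    (B C : Finset ι) : E (B ∪ C) ≤ E B + ∑ i ∈ C, (E (insert i B) - E B) := by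
  induction C using Finset.induction_on with
  | empty => simp
  | insert i C hi ih =>
    have h := hE i (subset_union_left : B ⊆ B ∪ C)
    rw [union_insert, sum_insert hi]
    linarith

lemma IsSubmodular.le_add_sum_singleton_sub {E : Finset ι → ℝ} (hE : IsSubmodular E)
    (C : Finset ι) : E C ≤ E ∅ + ∑ i ∈ C, (E {i} - E ∅) := by
  simpa using hE.le_add_sum_insert_sub ∅ C

lemma IsSubmodular.sum_compl_le [Fintype ι] {E : Finset ι → ℝ} (hE : IsSubmodular E)
    (hE0 : E ∅ = 0) (B : Finset ι) :
    ∑ i ∈ Bᶜ, (E {i} + E B - E (insert i B)) ≤ ∑ i, E {i} - E univ := by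
  have hcompl := hE.le_add_sum_insert_sub B Bᶜ
  have hB := hE.le_add_sum_singleton_sub B
  rw [union_compl] at hcompl
  simp only [hE0, sub_zero, zero_add] at hB
  have hsplit := sum_compl_add_sum B fun i => E {i}
  have hsum : ∑ i ∈ Bᶜ, (E {i} + E B - E (insert i B)) =
      ∑ i ∈ Bᶜ, E {i} - ∑ i ∈ Bᶜ, (E (insert i B) - E B) := by
    rw [← sum_sub_distrib]
    exact sum_congr rfl fun i _ => by ring
  linarith

end SetFunction

section EntropyOn

variable {ι X τ : Type*} [DecidableEq ι] [Fintype X] [Fintype τ]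

/-- `H(f_A, T)`. -/
def entropyOn (p : Ω → ℝ) (f : ι → Ω → X) (T : Ω → τ) (A : Finset ι) : ℝ :=
  entropy p fun ω => (A.restrict (f · ω), T ω)

lemma entropyOn_eq_entropy {f : ι → Ω → X} {T : Ω → τ} {A : Finset ι} {Z : Ω → β}
    (h : ∀ ω₁ ω₂, Z ω₁ = Z ω₂ ↔ (∀ j ∈ A, f j ω₁ = f j ω₂) ∧ T ω₁ = T ω₂) :
    entropyOn p f T A = entropy p Z :=
  entropy_congr fun ω₁ ω₂ => by simp [h, Prod.ext_iff, funext_iff]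

lemma isSubmodular_entropyOn (hp : IsPMF p) (f : ι → Ω → X) (T : Ω → τ) :
    IsSubmodular (entropyOn p f T) := by
  intro B D i hBD
  have h := entropy_submodular hp (f i) (fun ω => (B.restrict (f · ω), T ω))
    (fun ω => (D.restrict (f · ω), T ω))
  have hB : entropy p (fun ω => (B.restrict (f · ω), T ω)) = entropyOn p f T B := rfl
  have hiB : entropy p (fun ω => (f i ω, (B.restrict (f · ω), T ω))) =
      entropyOn p f T (insert i B) :=
    (entropyOn_eq_entropy fun ω₁ ω₂ => by
      simp only [Prod.ext_iff, funext_iff, restrict, Subtype.forall, mem_insert, forall_eq_or_imp]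
      tauto).symm
  have hD : entropy p (fun ω => ((B.restrict (f · ω), T ω), (D.restrict (f · ω), T ω))) =
      entropyOn p f T D :=
    (entropyOn_eq_entropy fun ω₁ ω₂ => by
      simp only [Prod.ext_iff, funext_iff, restrict, Subtype.forall, and_iff_right_iff_imp, and_imp]
      tauto).symm
  have hiD : entropy p (fun ω => ((f i ω, (B.restrict (f · ω), T ω)), (D.restrict (f · ω), T ω))) =
      entropyOn p f T (insert i D) :=
    (entropyOn_eq_entropy fun ω₁ ω₂ => by
      simp only [Prod.ext_iff, funext_iff, restrict, Subtype.forall, mem_insert, forall_eq_or_imp]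
      tauto).symm
  rw [hB, hiB, hD, hiD] at h
  linarith

end EntropyOn

section TotalCorrelation

variable {ι X : Type*} [Fintype ι] [DecidableEq ι] [Fintype X]

def totalCorrelation (p : Ω → ℝ) (f : ι → Ω → X) : ℝ :=
  ∑ i, entropy p (f i) - entropy p fun ω i => f i ω

lemma sum_compl_MI_le_totalCorrelation (hp : IsPMF p) (f : ι → Ω → X) (B : Finset ι) :
    ∑ i ∈ Bᶜ, MI p (f i) (fun ω => B.restrict (f · ω)) ≤ totalCorrelation p f := by
  have hE_empty : entropyOn p f (fun _ => ()) ∅ = 0 :=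
    (entropyOn_eq_entropy fun _ _ => by simp).trans (entropy_const hp ())
  have hE_single : ∀ i, entropyOn p f (fun _ => ()) {i} = entropy p (f i) := fun i =>
    entropyOn_eq_entropy fun _ _ => by simp
  have hE_univ : entropyOn p f (fun _ => ()) univ = entropy p fun ω i => f i ω :=
    entropyOn_eq_entropy fun _ _ => by simp [funext_iff]
  have hMI : ∀ i, MI p (f i) (fun ω => B.restrict (f · ω)) = entropyOn p f (fun _ => ()) {i} +
      entropyOn p f (fun _ => ()) B - entropyOn p f (fun _ => ()) (insert i B) := by
    intro i
    have hB : entropyOn p f (fun _ => ()) B = entropy p fun ω => B.restrict (f · ω) :=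
      entropyOn_eq_entropy fun _ _ => by simp [funext_iff]
    have hiB : entropyOn p f (fun _ => ()) (insert i B) =
        entropy p fun ω => (f i ω, B.restrict (f · ω)) :=
      entropyOn_eq_entropy fun _ _ => by simp [Prod.ext_iff, funext_iff]
    rw [MI_eq hp, hE_single, hB, hiB]
  calc ∑ i ∈ Bᶜ, MI p (f i) (fun ω => B.restrict (f · ω))
      = ∑ i ∈ Bᶜ, (entropyOn p f (fun _ => ()) {i} + entropyOn p f (fun _ => ()) B -
          entropyOn p f (fun _ => ()) (insert i B)) := sum_congr rfl fun i _ => hMI i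
    _ ≤ ∑ i, entropyOn p f (fun _ => ()) {i} - entropyOn p f (fun _ => ()) univ :=
      (isSubmodular_entropyOn hp f fun _ => ()).sum_compl_le hE_empty B
    _ = totalCorrelation p f := by simp only [hE_single, hE_univ, totalCorrelation]

lemma entropy_le_add_sum_condEntropy {τ : Type*} [Fintype τ] (hp : IsPMF p)
    (x : ι → Ω → X) (T : Ω → τ) :
    entropy p (fun ω => ((fun i => x i ω), T ω)) ≤ entropy p T + ∑ i, condEntropy p (x i) T := by
  have h := (isSubmodular_entropyOn hp x T).le_add_sum_singleton_sub univ
  rwa [entropyOn_eq_entropy (Z := fun ω => ((fun i => x i ω), T ω))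
      fun _ _ => by simp [Prod.ext_iff, funext_iff],
    entropyOn_eq_entropy (Z := T) fun _ _ => by simp,
    sum_congr rfl fun i _ => by rw [entropyOn_eq_entropy (Z := fun ω => (x i ω, T ω))
      fun _ _ => by simp [Prod.ext_iff]]] at h

lemma totalCorrelation_le_card_mul_log {Y : Type*} [Fintype Y] (hp : IsPMF p) {x : ι → Ω → X}
    (hind : dist' p (fun ω i => x i ω) = fun v => ∏ i, dist' p (x i) (v i))
    {f : ι → Ω → Y} {F : ι → X → Finset Y} {d : ℕ} (hF : ∀ i a, (F i a).card ≤ d)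
    (hf : ∀ i ω, f i ω ∈ F i (x i ω)) :
    totalCorrelation p f ≤ Fintype.card ι * log d := by
  have hcond : ∀ i, condEntropy p (x i) (fun ω i => f i ω) ≤
      entropy p (x i) + log d - entropy p (f i) := fun i =>
    calc condEntropy p (x i) (fun ω i => f i ω)
        ≤ condEntropy p (x i) (f i) :=
          condEntropy_le_condEntropy_comp hp (x i) (fun ω i => f i ω) (fun v => v i)
      _ ≤ entropy p (x i) + log d - entropy p (f i) := by
          have := entropy_pair_le_add_log hp (hF i) (hf i)
          rw [condEntropy]
          linarith
  have hchain : ∑ i, entropy p (x i) ≤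
      entropy p (fun ω i => f i ω) + ∑ i, condEntropy p (x i) (fun ω i => f i ω) :=
    calc ∑ i, entropy p (x i) = entropy p (fun ω i => x i ω) := (entropy_pi_of_indep hp x hind).symm
      _ ≤ entropy p (fun ω => ((fun i => x i ω), fun i => f i ω)) := entropy_le_entropy_pair hp _ _
      _ ≤ _ := entropy_le_add_sum_condEntropy hp x _
  have hsum := sum_le_sum fun i (_ : i ∈ univ) => hcond i
  simp only [sum_sub_distrib, sum_add_distrib, sum_const, card_univ, nsmul_eq_mul] at hsum
  rw [totalCorrelation]
  linarith

end TotalCorrelation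

end Entropy

lemma sum_sum_powersetCard_compl_singleton {ι M : Type*} [Fintype ι] [DecidableEq ι]
    [AddCommMonoid M] (g : ι → Finset ι → M) (r : ℕ) :
    ∑ i, ∑ B ∈ ({i}ᶜ : Finset ι).powersetCard r, g i B =
      ∑ B ∈ (univ : Finset ι).powersetCard r, ∑ i ∈ Bᶜ, g i B :=
  sum_comm' fun i B => by
    simp only [mem_univ, true_and, mem_powersetCard, subset_univ, mem_compl,
      subset_compl_singleton]

lemma mul_choose_pred_eq (m r : ℕ) :
    (m : ℝ) * ((m - 1).choose r : ℝ) = (m.choose r : ℝ) * ((m : ℝ) - r) := by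
  rcases m with _ | n
  · rcases r with _ | r <;> simp
  rcases le_or_gt r (n + 1) with hr | hr
  · have h := Nat.choose_mul_succ_eq n r
    rw [← Nat.cast_inj (R := ℝ), Nat.cast_mul, Nat.cast_mul, Nat.cast_sub hr] at h
    push_cast at h ⊢
    linarith
  · simp [Nat.choose_eq_zero_of_lt hr, Nat.choose_eq_zero_of_lt (by omega : n < r)]

/-- Bounding mutual information for low-degree corruptions: if `x₁,…,x_m` are independent and
`Corrupt` changes each coordinate to one of at most `d` values determined by that coordinate,
then for `S' = Corrupt(x₁,…,x_m)` and `r < m`,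
`E_{i,B}[I(S'_i ; S'_B)] ≤ (m/(m−r)) ln d` with `i` uniform in `[m]` and `B` a uniform
size-`r` subset of `[m]∖{i}`. -/
theorem statement13 {Ω X : Type*} [Fintype Ω] [Fintype X]
    (p : Ω → ℝ) (hp : IsPMF p) (m : ℕ) (x : Fin m → Ω → X)
    (hind : dist' p (fun ω => fun i => x i ω) = fun v => ∏ i, dist' p (x i) (v i))
    (d : ℕ) (Corrupt : (Fin m → X) → (Fin m → X))
    (hCor : ∀ i : Fin m, ∃ F : X → Finset X, (∀ a, (F a).card ≤ d) ∧
      ∀ v : Fin m → X, Corrupt v i ∈ F (v i))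
    (r : ℕ) (hr : r < m) :
    (∑ i : Fin m, ∑ B ∈ ({i}ᶜ : Finset (Fin m)).powersetCard r,
          MI p (fun ω => Corrupt (fun j => x j ω) i)
               (fun ω => fun (j : B) => Corrupt (fun j' => x j' ω) j.1))
        / ((m : ℝ) * ((m - 1).choose r : ℝ))
      ≤ ((m : ℝ) / ((m : ℝ) - (r : ℝ))) * Real.log d := by
  choose F hF hCorF using hCor
  have hTC := totalCorrelation_le_card_mul_log hp hind hF
    (f := fun i ω => Corrupt (fun j => x j ω) i) fun i ω => hCorF i _
  rw [Fintype.card_fin] at hTC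
  have hsum : (∑ i : Fin m, ∑ B ∈ ({i}ᶜ : Finset (Fin m)).powersetCard r,
        MI p (fun ω => Corrupt (fun j => x j ω) i)
          (fun ω => fun (j : B) => Corrupt (fun j' => x j' ω) j.1)) ≤
      m.choose r * (m * log d) := by
    rw [sum_sum_powersetCard_compl_singleton]
    calc _ ≤ ∑ _B ∈ (univ : Finset (Fin m)).powersetCard r, (m * log d : ℝ) :=
          sum_le_sum fun B _ => (sum_compl_MI_le_totalCorrelation hp _ B).trans hTC
      _ = m.choose r * (m * log d) := by simp [card_powersetCard]
  have hD : (0 : ℝ) < m * (m - 1).choose r := by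
    have := Nat.choose_pos (Nat.le_sub_one_of_lt hr)
    have : 0 < m := r.zero_le.trans_lt hr
    positivity
  have hmr : (0 : ℝ) < m - r := sub_pos.mpr (by exact_mod_cast hr)
  rw [div_le_iff₀ hD, mul_choose_pred_eq]
  calc _ ≤ (m.choose r : ℝ) * (m * log d) := hsum
    _ = _ := by field_simp
end
end
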